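/- arXiv:1904.03559 — 2 statements merged into one kernel-verified Lean document; each statement's English description precedes it below -/
import Mathlib

section
/- Let n ≥ 1, let w₁,…,wₙ be nonnegative reals with w₁ + ⋯ + wₙ = 1, and let σ₁,…,σₙ be positive reals. Define the Gaussian scale-mixture density p(x) = Σᵢ wᵢ φ_{σᵢ}(x), where φ_σ(x) = (2πσ²)^{-1/2} exp(−x²/(2σ²)). Then the Fisher information of p satisfies the upper bound ∫_ℝ (p'(x))² / p(x) dx ≤ Σᵢ wᵢ / σᵢ². -/
/-!
By Cauchy–Schwarz, `(Σ wᵢ pᵢ')² ≤ (Σ wᵢ pᵢ) (Σ wᵢ pᵢ'² / pᵢ)` pointwise, so Fisher information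
satisfies `I(Σ wᵢ pᵢ) ≤ Σ wᵢ I(pᵢ)` for nonnegative weights. For a centered Gaussian,
`φ_σ' = -(x / σ²) φ_σ`, hence `I(φ_σ) = σ⁻⁴ ∫ x² φ_σ = σ⁻²` since `φ_σ` has variance `σ²`.
-/

open MeasureTheory Real

/-- The centered Gaussian density with scale `σ`: `φ_σ(x) = (2πσ²)^{-1/2} exp(−x²/(2σ²))`. -/
noncomputable def gaussianDensity (σ : ℝ) (x : ℝ) : ℝ :=
  (2 * π * σ ^ 2) ^ (-(1 : ℝ) / 2) * Real.exp (-x ^ 2 / (2 * σ ^ 2))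

theorem Finset.sq_sum_mul_div_sum_mul_le {ι : Type*} (s : Finset ι) {w f : ι → ℝ} (g : ι → ℝ)
    (hw : ∀ i ∈ s, 0 ≤ w i) (hf : ∀ i ∈ s, 0 < f i) :
    (∑ i ∈ s, w i * g i) ^ 2 / ∑ i ∈ s, w i * f i ≤ ∑ i ∈ s, w i * (g i ^ 2 / f i) := by
  have hwf : ∀ i ∈ s, 0 ≤ w i * f i := fun i hi => mul_nonneg (hw i hi) (hf i hi).le
  have hwgf : ∀ i ∈ s, 0 ≤ w i * (g i ^ 2 / f i) := fun i hi =>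
    mul_nonneg (hw i hi) (div_nonneg (sq_nonneg _) (hf i hi).le)
  refine div_le_of_le_mul₀ (Finset.sum_nonneg hwf) (Finset.sum_nonneg hwgf)
    (s.sum_sq_le_sum_mul_sum_of_sq_le_mul hwgf hwf fun i hi => le_of_eq ?_)
  field_simp [(hf i hi).ne']

noncomputable def fisherInfo (p : ℝ → ℝ) : ℝ :=
  ∫ x, deriv p x ^ 2 / p x

theorem fisherInfo_sum_le {ι : Type*} (s : Finset ι) {w : ι → ℝ} {p : ι → ℝ → ℝ}
    (hw : ∀ i ∈ s, 0 ≤ w i) (hp : ∀ i ∈ s, ∀ x, 0 < p i x)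
    (hdiff : ∀ i ∈ s, Differentiable ℝ (p i))
    (hint : ∀ i ∈ s, Integrable fun x => deriv (p i) x ^ 2 / p i x) :
    fisherInfo (fun x => ∑ i ∈ s, w i * p i x) ≤ ∑ i ∈ s, w i * fisherInfo (p i) := by
  have hderiv (x : ℝ) : deriv (fun y => ∑ i ∈ s, w i * p i y) x = ∑ i ∈ s, w i * deriv (p i) x :=
    (HasDerivAt.fun_sum fun i hi => ((hdiff i hi x).hasDerivAt.const_mul (w i))).deriv
  have hmix_nonneg (x : ℝ) : 0 ≤ ∑ i ∈ s, w i * p i x :=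
    Finset.sum_nonneg fun i hi => mul_nonneg (hw i hi) (hp i hi x).le
  calc fisherInfo (fun x => ∑ i ∈ s, w i * p i x)
      ≤ ∫ x, ∑ i ∈ s, w i * (deriv (p i) x ^ 2 / p i x) := by
        refine integral_mono_of_nonneg (ae_of_all _ fun x => ?_)
          (integrable_finsetSum _ fun i hi => (hint i hi).const_mul (w i))
          (ae_of_all _ fun x => ?_)
        · exact div_nonneg (sq_nonneg _) (hmix_nonneg x)
        · simp only [hderiv]
          exact s.sq_sum_mul_div_sum_mul_le _ hw fun i hi => hp i hi x
    _ = ∑ i ∈ s, w i * fisherInfo (p i) := by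
        rw [integral_finsetSum _ fun i hi => (hint i hi).const_mul (w i)]
        simp only [integral_const_mul, fisherInfo]

open ProbabilityTheory

theorem gaussianDensity_eq_gaussianPDFReal (σ : ℝ) :
    gaussianDensity σ = gaussianPDFReal 0 (σ ^ 2).toNNReal := by
  ext x
  rw [gaussianDensity, gaussianPDFReal, Real.coe_toNNReal _ (sq_nonneg σ), sub_zero, neg_div,
    Real.rpow_neg (by positivity), Real.sqrt_eq_rpow]

theorem gaussianDensity_pos {σ : ℝ} (hσ : σ ≠ 0) (x : ℝ) : 0 < gaussianDensity σ x := by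
  rw [gaussianDensity_eq_gaussianPDFReal]
  exact gaussianPDFReal_pos _ _ _ (by simpa using hσ)

theorem hasDerivAt_gaussianDensity (σ x : ℝ) :
    HasDerivAt (gaussianDensity σ) (-(x / σ ^ 2) * gaussianDensity σ x) x := by
  have h := (((hasDerivAt_pow 2 x).fun_neg.div_const (2 * σ ^ 2)).exp).const_mul
    ((2 * π * σ ^ 2) ^ (-(1 : ℝ) / 2))
  refine h.congr_deriv ?_
  rw [gaussianDensity]
  by_cases hσ : σ = 0
  · simp [hσ]
  · field_simp
    ring

theorem integral_sq_mul_gaussianDensity {σ : ℝ} (hσ : σ ≠ 0) :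
    ∫ x, x ^ 2 * gaussianDensity σ x = σ ^ 2 := by
  have hv : (σ ^ 2).toNNReal ≠ 0 := by simpa using hσ
  have hvar := variance_id_gaussianReal (μ := 0) (v := (σ ^ 2).toNNReal)
  rw [variance_of_integral_eq_zero aemeasurable_id integral_id_gaussianReal,
    integral_gaussianReal_eq_integral_smul hv] at hvar
  simpa [gaussianDensity_eq_gaussianPDFReal, mul_comm, Real.coe_toNNReal _ (sq_nonneg σ)]
    using hvar

theorem integrable_sq_mul_gaussianDensity {σ : ℝ} (hσ : σ ≠ 0) :
    Integrable fun x => x ^ 2 * gaussianDensity σ x := by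
  have hv : (σ ^ 2).toNNReal ≠ 0 := by simpa using hσ
  have h := (memLp_id_gaussianReal (μ := 0) (v := (σ ^ 2).toNNReal) 2).integrable_sq
  rw [gaussianReal_of_var_ne_zero _ hv, integrable_withDensity_iff_integrable_smul'
    (measurable_gaussianPDF _ _) (ae_of_all _ fun _ => gaussianPDF_lt_top)] at h
  simpa [gaussianPDF, gaussianDensity_eq_gaussianPDFReal, mul_comm,
    ENNReal.toReal_ofReal (gaussianPDFReal_nonneg _ _ _)] using h

theorem differentiable_gaussianDensity (σ : ℝ) : Differentiable ℝ (gaussianDensity σ) :=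
  fun x => (hasDerivAt_gaussianDensity σ x).differentiableAt

theorem deriv_gaussianDensity_sq_div (σ x : ℝ) :
    deriv (gaussianDensity σ) x ^ 2 / gaussianDensity σ x =
      (σ ^ 4)⁻¹ * (x ^ 2 * gaussianDensity σ x) := by
  rw [(hasDerivAt_gaussianDensity σ x).deriv]
  by_cases h : gaussianDensity σ x = 0
  · simp [h]
  · field_simp

theorem integrable_deriv_sq_div_gaussianDensity {σ : ℝ} (hσ : σ ≠ 0) :
    Integrable fun x => deriv (gaussianDensity σ) x ^ 2 / gaussianDensity σ x := by
  simpa only [deriv_gaussianDensity_sq_div] using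
    (integrable_sq_mul_gaussianDensity hσ).const_mul (σ ^ 4)⁻¹

theorem fisherInfo_gaussianDensity {σ : ℝ} (hσ : σ ≠ 0) :
    fisherInfo (gaussianDensity σ) = (σ ^ 2)⁻¹ := by
  rw [fisherInfo]
  simp only [deriv_gaussianDensity_sq_div, integral_const_mul, integral_sq_mul_gaussianDensity hσ]
  field_simp

theorem fisher_info_mixture_le_general (n : ℕ) (w σ : Fin n → ℝ)
    (hw : ∀ i, 0 ≤ w i) (hσ : ∀ i, 0 < σ i) :
    ∫ x : ℝ, (deriv (fun y => ∑ i, w i * gaussianDensity (σ i) y) x) ^ 2 /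
        (∑ i, w i * gaussianDensity (σ i) x) ≤ ∑ i, w i / (σ i) ^ 2 := by
  calc fisherInfo (fun y => ∑ i, w i * gaussianDensity (σ i) y)
      ≤ ∑ i, w i * fisherInfo (gaussianDensity (σ i)) :=
        fisherInfo_sum_le _ (fun i _ => hw i) (fun i _ => gaussianDensity_pos (hσ i).ne')
          (fun i _ => differentiable_gaussianDensity (σ i))
          (fun i _ => integrable_deriv_sq_div_gaussianDensity (hσ i).ne')
    _ = ∑ i, w i / σ i ^ 2 := by
        simp only [fisherInfo_gaussianDensity (hσ _).ne', div_eq_mul_inv]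

/-- Upper bound on the Fisher information of a Gaussian scale mixture:
`I(p) ≤ Σᵢ wᵢ / σᵢ²`. -/
theorem fisher_info_mixture_le (n : ℕ) (hn : 1 ≤ n) (w σ : Fin n → ℝ)
    (hw : ∀ i, 0 ≤ w i) (hws : ∑ i, w i = 1) (hσ : ∀ i, 0 < σ i) :
    ∫ x : ℝ, (deriv (fun y => ∑ i, w i * gaussianDensity (σ i) y) x) ^ 2 /
        (∑ i, w i * gaussianDensity (σ i) x) ≤ ∑ i, w i / (σ i) ^ 2 :=
  fisher_info_mixture_le_general n w σ hw hσ
end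

section
/- Let n ≥ 1, let A₁,…,Aₙ be Hermitian positive definite d×d complex matrices, and let w₁,…,wₙ be nonnegative reals with Σᵢ wᵢ = 1. Then (Σᵢ wᵢ Aᵢ)⁻¹ ≤ Σᵢ wᵢ Aᵢ⁻¹ in the Loewner order; that is, Σᵢ wᵢ Aᵢ⁻¹ − (Σᵢ wᵢ Aᵢ)⁻¹ is positive semidefinite. The matrices A₁,…,Aₙ are not assumed to commute. -/
/-!
For positive definite `A`, the block matrix `[A 1; 1 A⁻¹]` is positive semidefinite, its Schur
complement `A⁻¹ - A⁻¹` being zero. A convex combination of these blocks is `[S 1; 1 T]` with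
`S = Σ wᵢ Aᵢ` and `T = Σ wᵢ Aᵢ⁻¹`, again positive semidefinite, so its Schur complement
`T - S⁻¹` is positive semidefinite.
-/

open Matrix
open scoped ComplexOrder

namespace Matrix

variable {ι m : Type*}

theorem sum_fromBlocks {n o p α : Type*} [AddCommMonoid α] (s : Finset ι)
    (A : ι → Matrix n o α) (B : ι → Matrix n p α) (C : ι → Matrix m o α) (D : ι → Matrix m p α) :
    ∑ i ∈ s, fromBlocks (A i) (B i) (C i) (D i) =
      fromBlocks (∑ i ∈ s, A i) (∑ i ∈ s, B i) (∑ i ∈ s, C i) (∑ i ∈ s, D i) := by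
  ext (i | i) (j | j) <;> simp [sum_apply]

variable {K : Type*} [Field K] [PartialOrder K] [StarRing K] [StarOrderedRing K]

theorem posDef_sum_smul {s : Finset ι} {A : ι → Matrix m m K} (hA : ∀ i ∈ s, (A i).PosDef)
    {w : ι → K} (hw : ∀ i ∈ s, 0 ≤ w i) (hws : ∑ i ∈ s, w i = 1) :
    (∑ i ∈ s, w i • A i).PosDef := by
  classical
  obtain ⟨j, hjs, hj⟩ : ∃ j ∈ s, 0 < w j := by
    by_contra! h
    have : ∑ i ∈ s, w i = 0 := Finset.sum_eq_zero fun i hi => by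
      by_contra hne
      exact h i hi ((hw i hi).lt_of_ne' hne)
    simp [this] at hws
  rw [← Finset.add_sum_erase _ _ hjs]
  refine ((hA j hjs).smul hj).add_posSemidef (posSemidef_sum _ fun i hi => ?_)
  have hi := Finset.mem_of_mem_erase hi
  exact (hA i hi).posSemidef.smul (hw i hi)

variable [Fintype m] [DecidableEq m]

theorem PosDef.posSemidef_fromBlocks_one_one_inv {A : Matrix m m K} (hA : A.PosDef) :
    (fromBlocks A 1 1 A⁻¹).PosSemidef := by
  have := hA.isUnit.invertible
  simpa using (hA.fromBlocks₁₁ (1 : Matrix m m K) A⁻¹).mpr (by simpa using .zero)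

theorem PosDef.posSemidef_sub_inv_of_posSemidef_fromBlocks {S T : Matrix m m K} (hS : S.PosDef)
    (h : (fromBlocks S 1 1 T).PosSemidef) : (T - S⁻¹).PosSemidef := by
  have := hS.isUnit.invertible
  simpa using (hS.fromBlocks₁₁ (1 : Matrix m m K) T).mp (by simpa using h)

theorem posSemidef_sum_smul_inv_sub_inv_sum_smul {s : Finset ι} {A : ι → Matrix m m K}
    (hA : ∀ i ∈ s, (A i).PosDef) {w : ι → K} (hw : ∀ i ∈ s, 0 ≤ w i) (hws : ∑ i ∈ s, w i = 1) :
    (∑ i ∈ s, w i • (A i)⁻¹ - (∑ i ∈ s, w i • A i)⁻¹).PosSemidef := by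
  refine (posDef_sum_smul hA hw hws).posSemidef_sub_inv_of_posSemidef_fromBlocks ?_
  have hblocks : fromBlocks (∑ i ∈ s, w i • A i) 1 1 (∑ i ∈ s, w i • (A i)⁻¹) =
      ∑ i ∈ s, w i • fromBlocks (A i) 1 1 (A i)⁻¹ := by
    simp only [fromBlocks_smul, sum_fromBlocks, ← Finset.sum_smul, hws, one_smul]
  rw [hblocks]
  exact posSemidef_sum _ fun i hi => (hA i hi).posSemidef_fromBlocks_one_one_inv.smul (hw i hi)

end Matrix

theorem matrix_arith_harmonic_general (n d : ℕ)
    (A : Fin n → Matrix (Fin d) (Fin d) ℂ) (hA : ∀ i, (A i).PosDef)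
    (w : Fin n → ℝ) (hw : ∀ i, 0 ≤ w i) (hws : ∑ i, w i = 1) :
    (∑ i, (w i : ℂ) • (A i)⁻¹ - (∑ i, (w i : ℂ) • A i)⁻¹).PosSemidef :=
  posSemidef_sum_smul_inv_sub_inv_sum_smul (fun i _ => hA i)
    (fun i _ => Complex.zero_le_real.mpr (hw i)) (by exact_mod_cast hws)

/-- Weighted arithmetic–harmonic mean inequality for Hermitian positive definite matrices
(not assumed to commute), in the Loewner order:
`(Σᵢ wᵢ Aᵢ)⁻¹ ≤ Σᵢ wᵢ Aᵢ⁻¹`. -/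
theorem matrix_arith_harmonic (n d : ℕ) (hn : 1 ≤ n)
    (A : Fin n → Matrix (Fin d) (Fin d) ℂ) (hA : ∀ i, (A i).PosDef)
    (w : Fin n → ℝ) (hw : ∀ i, 0 ≤ w i) (hws : ∑ i, w i = 1) :
    (∑ i, (w i : ℂ) • (A i)⁻¹ - (∑ i, (w i : ℂ) • A i)⁻¹).PosSemidef :=
  matrix_arith_harmonic_general n d A hA w hw hws
end
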